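/- arXiv:1907.04285 — 4 statements merged into one kernel-verified Lean document; each statement's English description precedes it below -/
import Mathlib

section
/- If φ ∈ ℝ^K satisfies 𝒦φ = λφ with λ > 0 and φ has Euclidean norm 1, then the vector ψ := λ^{−1/2} ∑_{i=0}^{K−1} √(α_i) φ_i y_i ∈ X satisfies ‖ψ‖_X = 1 and Rψ = λψ, i.e. ψ is a unit eigenvector of the correlation operator R with the same eigenvalue λ (method of snapshots). -/
open scoped InnerProductSpace
open Finset

/-- Method of snapshots: a unit eigenvector `φ` of the snapshot Gramian `𝒦` with
eigenvalue `λ > 0` yields a unit eigenvector `ψ = λ^{-1/2} ∑ i, √(α i) φ i • y i` of the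
correlation operator `R x = ∑ i, α i ⟪x, y i⟫ • y i` with the same eigenvalue. -/
theorem method_of_snapshots
    {X : Type*} [NormedAddCommGroup X] [InnerProductSpace ℝ X] [CompleteSpace X]
    {K : ℕ} (y : Fin K → X) (α : Fin K → ℝ) (hα : ∀ i, 0 < α i)
    (𝒦 : Matrix (Fin K) (Fin K) ℝ)
    (h𝒦 : ∀ i j, 𝒦 i j = Real.sqrt (α i * α j) * ⟪y i, y j⟫_ℝ)
    (R : X → X)
    (hR : ∀ x, R x = ∑ i, (α i * ⟪x, y i⟫_ℝ) • y i)
    (φ : Fin K → ℝ) (lam : ℝ) (hlam : 0 < lam)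
    (heig : 𝒦.mulVec φ = lam • φ)
    (hφnorm : ∑ i, φ i ^ 2 = 1)
    (ψ : X)
    (hψ : ψ = (Real.sqrt lam)⁻¹ • ∑ i, (Real.sqrt (α i) * φ i) • y i) :
    ‖ψ‖ = 1 ∧ R ψ = lam • ψ := by
  set v : X := ∑ i, (Real.sqrt (α i) * φ i) • y i with hv
  have hsqrt_pos : 0 < Real.sqrt lam := Real.sqrt_pos.mpr hlam
  have key : ∀ i, Real.sqrt (α i) * ⟪v, y i⟫_ℝ = lam * φ i := by
    intro i
    have hmv : (𝒦.mulVec φ) i = lam * φ i := by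
      rw [heig]; simp
    have : (𝒦.mulVec φ) i = Real.sqrt (α i) * ⟪v, y i⟫_ℝ := by
      rw [hv, sum_inner, Matrix.mulVec, dotProduct, Finset.mul_sum]
      refine Finset.sum_congr rfl fun j _ => ?_
      rw [h𝒦 i j, real_inner_smul_left,
        Real.sqrt_mul (le_of_lt (hα i)), real_inner_comm]
      ring
    rw [← this, hmv]
  have hvv : ⟪v, v⟫_ℝ = lam := by
    nth_rewrite 2 [hv]
    rw [inner_sum]
    have : ∀ i ∈ Finset.univ, ⟪v, (Real.sqrt (α i) * φ i) • y i⟫_ℝ = lam * φ i ^ 2 := by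
      intro i _
      rw [real_inner_smul_right]
      linear_combination φ i * key i
    rw [Finset.sum_congr rfl this, ← Finset.mul_sum, hφnorm, mul_one]
  have hnv : ‖v‖ = Real.sqrt lam := by
    have : ‖v‖ ^ 2 = lam := by rw [← real_inner_self_eq_norm_sq, hvv]
    rw [← this, Real.sqrt_sq (norm_nonneg v)]
  constructor
  · rw [hψ, norm_smul, hnv]
    rw [Real.norm_eq_abs, abs_of_pos (inv_pos.mpr hsqrt_pos)]
    exact inv_mul_cancel₀ (ne_of_gt hsqrt_pos)
  · rw [hR, hψ, smul_smul]
    have : ∀ i ∈ Finset.univ,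
        (α i * ⟪(Real.sqrt lam)⁻¹ • v, y i⟫_ℝ) • y i
          = ((lam * (Real.sqrt lam)⁻¹) * (Real.sqrt (α i) * φ i)) • y i := by
      intro i _
      congr 1
      rw [real_inner_smul_left]
      have hαi : α i = Real.sqrt (α i) * Real.sqrt (α i) :=
        (Real.mul_self_sqrt (le_of_lt (hα i))).symm
      linear_combination (Real.sqrt (α i) * (Real.sqrt lam)⁻¹) * key i +
        ((Real.sqrt lam)⁻¹ * ⟪v, y i⟫_ℝ) * hαi
    rw [Finset.sum_congr rfl this, hv, Finset.smul_sum]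
    exact Finset.sum_congr rfl fun i _ => (smul_smul _ _ _).symm
end

section
/- Let λ_1 ≥ λ_2 ≥ … ≥ λ_K ≥ 0 be the eigenvalues of the snapshot Gramian 𝒦 with a corresponding Euclidean-orthonormal eigenbasis φ^1, …, φ^K of ℝ^K. Let 1 ≤ ℓ ≤ K with λ_ℓ > 0 and define the POD basis ψ_j := λ_j^{−1/2} ∑_{i=0}^{K−1} √(α_i) φ^j_i y_i for j = 1, …, ℓ. Then the weighted projection error satisfies ∑_{i=0}^{K−1} α_i ‖y_i − ∑_{j=1}^{ℓ} (y_i, ψ_j)_X ψ_j‖_X² = ∑_{j=ℓ+1}^{K} λ_j. -/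
open scoped InnerProductSpace
open Finset

/-- POD projection error formula: for the POD basis of rank `ℓ` built from an
Euclidean-orthonormal eigenbasis of the snapshot Gramian `𝒦` (eigenvalues in decreasing
order, the `ℓ`-th one positive), the weighted projection error of the snapshots equals
the sum of the remaining eigenvalues.  Indices: eigenpair `j : Fin K` corresponds to
`λ_{j+1}` in the usual enumeration `λ_1 ≥ … ≥ λ_K`. -/
theorem pod_projection_error
    {X : Type*} [NormedAddCommGroup X] [InnerProductSpace ℝ X] [CompleteSpace X]
    {K : ℕ} (y : Fin K → X) (α : Fin K → ℝ) (hα : ∀ i, 0 < α i)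
    (𝒦 : Matrix (Fin K) (Fin K) ℝ)
    (h𝒦 : ∀ i j, 𝒦 i j = Real.sqrt (α i * α j) * ⟪y i, y j⟫_ℝ)
    (lam : Fin K → ℝ) (φ : Fin K → Fin K → ℝ)
    (hdec : Antitone lam) (hnonneg : ∀ j, 0 ≤ lam j)
    (heig : ∀ j, 𝒦.mulVec (φ j) = lam j • φ j)
    (horth : ∀ j j', ∑ i, φ j i * φ j' i = if j = j' then 1 else 0)
    (ℓ : ℕ) (hℓ1 : 1 ≤ ℓ) (hℓK : ℓ ≤ K)
    (hpos : 0 < lam ⟨ℓ - 1, by omega⟩)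
    (ψ : Fin K → X)
    (hψ : ∀ j : Fin K, (j : ℕ) < ℓ →
      ψ j = (Real.sqrt (lam j))⁻¹ • ∑ i, (Real.sqrt (α i) * φ j i) • y i) :
    ∑ i, α i *
        ‖y i - ∑ j ∈ univ.filter (fun j : Fin K => (j : ℕ) < ℓ), ⟪y i, ψ j⟫_ℝ • ψ j‖ ^ 2
      = ∑ j ∈ univ.filter (fun j : Fin K => ℓ ≤ (j : ℕ)), lam j := by
  classical
  set S := univ.filter (fun j : Fin K => (j : ℕ) < ℓ) with hSdef
  set z : Fin K → X := fun i => Real.sqrt (α i) • y i with hzdef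
  -- Gramian entries as inner products of the z's
  have hzz : ∀ i k, ⟪z i, z k⟫_ℝ = 𝒦 i k := by
    intro i k
    simp only [hzdef, real_inner_smul_left, real_inner_smul_right]
    rw [h𝒦, Real.sqrt_mul (hα i).le]
    ring
  -- positivity of leading eigenvalues
  have hlampos : ∀ j : Fin K, (j : ℕ) < ℓ → 0 < lam j := by
    intro j hj
    refine lt_of_lt_of_le hpos (hdec ?_)
    rw [Fin.le_def]
    simp only []
    omega
  -- mulVec pointwise
  have hmv : ∀ (j : Fin K) (i : Fin K), ∑ k, 𝒦 i k * φ j k = lam j * φ j i := by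
    intro j i
    have := congrFun (heig j) i
    simpa [Matrix.mulVec, dotProduct] using this
  -- inner products of z with ψ
  have hzψ : ∀ (j : Fin K), (j : ℕ) < ℓ → ∀ i,
      ⟪z i, ψ j⟫_ℝ = Real.sqrt (lam j) * φ j i := by
    intro j hj i
    have hlj := hlampos j hj
    have hsq : Real.sqrt (lam j) ≠ 0 := ne_of_gt (Real.sqrt_pos.mpr hlj)
    rw [hψ j hj, real_inner_smul_right, inner_sum]
    have hterm : ∀ k, ⟪z i, (Real.sqrt (α k) * φ j k) • y k⟫_ℝ = 𝒦 i k * φ j k := by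
      intro k
      rw [real_inner_smul_right, ← hzz i k]
      simp only [hzdef, real_inner_smul_left, real_inner_smul_right]
      ring
    rw [sum_congr rfl fun k _ => hterm k, hmv j i]
    field_simp
    linear_combination -φ j i * Real.sq_sqrt hlj.le
  -- relation between ⟪y i, ψ j⟫ and ⟪z i, ψ j⟫
  have hyzψ : ∀ i (j : Fin K), Real.sqrt (α i) * ⟪y i, ψ j⟫_ℝ = ⟪z i, ψ j⟫_ℝ := by
    intro i j
    simp [hzdef, real_inner_smul_left]
  -- orthonormality of ψ on the first ℓ indices
  have hψψ : ∀ (j : Fin K), (j : ℕ) < ℓ → ∀ (j' : Fin K), (j' : ℕ) < ℓ →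
      ⟪ψ j, ψ j'⟫_ℝ = if j = j' then 1 else 0 := by
    intro j hj j' hj'
    have hlj := hlampos j hj
    have hsq : Real.sqrt (lam j) ≠ 0 := ne_of_gt (Real.sqrt_pos.mpr hlj)
    rw [hψ j hj, real_inner_smul_left, sum_inner]
    have hterm : ∀ i, ⟪(Real.sqrt (α i) * φ j i) • y i, ψ j'⟫_ℝ
        = φ j i * (Real.sqrt (lam j') * φ j' i) := by
      intro i
      rw [real_inner_smul_left, ← hzψ j' hj' i, ← hyzψ i j']
      ring
    rw [sum_congr rfl fun i _ => hterm i]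
    have hrw : ∑ i, φ j i * (Real.sqrt (lam j') * φ j' i)
        = Real.sqrt (lam j') * ∑ i, φ j i * φ j' i := by
      rw [mul_sum]
      exact sum_congr rfl fun i _ => by ring
    rw [hrw, horth]
    by_cases h : j = j'
    · subst h
      simp only [if_pos rfl, mul_one]
      field_simp
    · simp [h]
  -- pointwise error formula
  have hpt : ∀ i, α i *
      ‖y i - ∑ j ∈ S, ⟪y i, ψ j⟫_ℝ • ψ j‖ ^ 2
      = 𝒦 i i - ∑ j ∈ S, lam j * φ j i ^ 2 := by
    intro i
    have hSmem : ∀ j ∈ S, (j : ℕ) < ℓ := fun j hj => (mem_filter.mp hj).2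
    set w := ∑ j ∈ S, ⟪z i, ψ j⟫_ℝ • ψ j with hwdef
    have h1 : z i - w = Real.sqrt (α i) • (y i - ∑ j ∈ S, ⟪y i, ψ j⟫_ℝ • ψ j) := by
      rw [smul_sub, smul_sum, hwdef, hzdef]
      congr 1
      refine sum_congr rfl fun j _ => ?_
      rw [smul_smul, hyzψ i j]
    have h2 : α i * ‖y i - ∑ j ∈ S, ⟪y i, ψ j⟫_ℝ • ψ j‖ ^ 2 = ‖z i - w‖ ^ 2 := by
      rw [h1, norm_smul, mul_pow, Real.norm_eq_abs,
        abs_of_nonneg (Real.sqrt_nonneg _), Real.sq_sqrt (hα i).le]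
    have hzw : ⟪z i, w⟫_ℝ = ∑ j ∈ S, (Real.sqrt (lam j) * φ j i) ^ 2 := by
      rw [hwdef, inner_sum]
      refine sum_congr rfl fun j hj => ?_
      rw [real_inner_smul_right, hzψ j (hSmem j hj) i]
      ring
    have hww : ⟪w, w⟫_ℝ = ∑ j ∈ S, (Real.sqrt (lam j) * φ j i) ^ 2 := by
      rw [hwdef, sum_inner]
      refine sum_congr rfl fun j hj => ?_
      rw [real_inner_smul_left, inner_sum]
      have : ∀ j' ∈ S, ⟪ψ j, ⟪z i, ψ j'⟫_ℝ • ψ j'⟫_ℝ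
          = if j = j' then ⟪z i, ψ j'⟫_ℝ else 0 := by
        intro j' hj'
        rw [real_inner_smul_right, hψψ j (hSmem j hj) j' (hSmem j' hj')]
        by_cases h : j = j' <;> simp [h]
      rw [sum_congr rfl this, sum_ite_eq (S) j (fun j' => ⟪z i, ψ j'⟫_ℝ), if_pos hj,
        hzψ j (hSmem j hj) i]
      ring
    have hnz : ‖z i‖ ^ 2 = 𝒦 i i := by
      rw [← real_inner_self_eq_norm_sq, hzz]
    rw [h2, norm_sub_sq_real, hnz, hzw, ← real_inner_self_eq_norm_sq, hww]
    have : ∀ j ∈ S, (Real.sqrt (lam j) * φ j i) ^ 2 = lam j * φ j i ^ 2 := by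
      intro j hj
      rw [mul_pow, Real.sq_sqrt (hnonneg j)]
    rw [sum_congr rfl this]
    ring
  -- trace identity
  have hcol : ∀ i k, ∑ j, φ j i * φ j k = if i = k then 1 else 0 := by
    set Φ : Matrix (Fin K) (Fin K) ℝ := Matrix.of φ with hΦ
    have h1 : Φ * Φ.transpose = 1 := by
      ext j j'
      simpa [hΦ, Matrix.mul_apply, Matrix.transpose_apply, Matrix.one_apply] using horth j j'
    have h2 : Φ.transpose * Φ = 1 := mul_eq_one_comm.mp h1
    intro i k
    have := congrFun (congrFun h2 i) k
    simpa [hΦ, Matrix.mul_apply, Matrix.transpose_apply, Matrix.one_apply] using this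
  have htr : ∑ i, 𝒦 i i = ∑ j, lam j := by
    have step1 : ∑ j, lam j = ∑ j, ∑ i, (∑ k, 𝒦 i k * φ j k) * φ j i := by
      refine sum_congr rfl fun j _ => ?_
      have : ∀ i, (∑ k, 𝒦 i k * φ j k) * φ j i = lam j * (φ j i * φ j i) := by
        intro i; rw [hmv j i]; ring
      rw [sum_congr rfl fun i _ => this i, ← mul_sum, horth, if_pos rfl, mul_one]
    have step2 : ∑ j, ∑ i, (∑ k, 𝒦 i k * φ j k) * φ j i
        = ∑ i, ∑ k, 𝒦 i k * ∑ j, φ j k * φ j i := by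
      rw [sum_comm]
      refine sum_congr rfl fun i _ => ?_
      have : ∀ j, (∑ k, 𝒦 i k * φ j k) * φ j i = ∑ k, 𝒦 i k * (φ j k * φ j i) := by
        intro j; rw [sum_mul]; exact sum_congr rfl fun k _ => by ring
      rw [sum_congr rfl fun j _ => this j, sum_comm]
      exact sum_congr rfl fun k _ => by rw [← mul_sum]
    have step3 : ∑ i, ∑ k, 𝒦 i k * ∑ j, φ j k * φ j i = ∑ i, 𝒦 i i := by
      refine sum_congr rfl fun i _ => ?_
      have : ∀ k, 𝒦 i k * ∑ j, φ j k * φ j i = if k = i then 𝒦 i k else 0 := by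
        intro k
        rw [hcol k i]
        by_cases h : k = i <;> simp [h]
      rw [sum_congr rfl fun k _ => this k, sum_ite_eq' univ i (fun k => 𝒦 i k), if_pos (mem_univ i)]
    rw [step1, step2, step3]
  -- put everything together
  rw [sum_congr rfl fun i _ => hpt i, sum_sub_distrib, htr]
  have hswap : ∑ i, ∑ j ∈ S, lam j * φ j i ^ 2 = ∑ j ∈ S, lam j := by
    rw [sum_comm]
    refine sum_congr rfl fun j _ => ?_
    have : ∀ i, lam j * φ j i ^ 2 = lam j * (φ j i * φ j i) := by intro i; ring
    rw [sum_congr rfl fun i _ => this i, ← mul_sum, horth, if_pos rfl, mul_one]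
  rw [hswap]
  have hsplit := sum_filter_add_sum_filter_not univ (fun j : Fin K => (j : ℕ) < ℓ) lam
  have hnot : univ.filter (fun j : Fin K => ¬ (j : ℕ) < ℓ)
      = univ.filter (fun j : Fin K => ℓ ≤ (j : ℕ)) := by
    refine filter_congr fun j _ => ?_
    simp [Nat.not_lt]
  rw [hnot] at hsplit
  rw [← hsplit, hSdef]
  ring
end

section
/- Let λ_1 ≥ λ_2 ≥ … ≥ λ_K ≥ 0 be the eigenvalues of the snapshot Gramian 𝒦 in decreasing order and let 1 ≤ ℓ ≤ K. Then for every X-orthonormal family ψ̃_1, …, ψ̃_ℓ ∈ X one has ∑_{i=0}^{K−1} α_i ‖y_i − ∑_{j=1}^{ℓ} (y_i, ψ̃_j)_X ψ̃_j‖_X² ≥ ∑_{j=ℓ+1}^{K} λ_j. Consequently, the POD basis of rank ℓ built from eigenvectors of 𝒦 to the ℓ largest eigenvalues solves the POD minimization problem min ∑_i α_i ‖y_i − ∑_{j=1}^ℓ (y_i, ψ_j)_X ψ_j‖_X² over orthonormal families {ψ_1, …, ψ_ℓ} ⊂ X. -/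
open scoped InnerProductSpace
open Finset

/-- POD optimality: for any `X`-orthonormal family `ψ̃_1, …, ψ̃_ℓ`, the weighted
projection error of the snapshots is at least the sum of the `K - ℓ` smallest
eigenvalues of the snapshot Gramian `𝒦` (eigenvalues in decreasing order, counted with
multiplicity via an Euclidean-orthonormal eigenbasis).  Hence the POD basis built from
eigenvectors to the `ℓ` largest eigenvalues, whose error equals `∑_{j>ℓ} λ_j`, solves
the POD minimization problem. -/
theorem pod_optimality
    {X : Type*} [NormedAddCommGroup X] [InnerProductSpace ℝ X] [CompleteSpace X]
    {K : ℕ} (y : Fin K → X) (α : Fin K → ℝ) (hα : ∀ i, 0 < α i)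
    (𝒦 : Matrix (Fin K) (Fin K) ℝ)
    (h𝒦 : ∀ i j, 𝒦 i j = Real.sqrt (α i * α j) * ⟪y i, y j⟫_ℝ)
    (lam : Fin K → ℝ) (φ : Fin K → Fin K → ℝ)
    (hdec : Antitone lam) (hnonneg : ∀ j, 0 ≤ lam j)
    (heig : ∀ j, 𝒦.mulVec (φ j) = lam j • φ j)
    (horth : ∀ j j', ∑ i, φ j i * φ j' i = if j = j' then 1 else 0)
    (ℓ : ℕ) (hℓ1 : 1 ≤ ℓ) (hℓK : ℓ ≤ K)
    (ψt : Fin ℓ → X) (hψt : Orthonormal ℝ ψt) :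
    ∑ j ∈ univ.filter (fun j : Fin K => ℓ ≤ (j : ℕ)), lam j
      ≤ ∑ i, α i * ‖y i - ∑ j, ⟪y i, ψt j⟫_ℝ • ψt j‖ ^ 2 := by
  classical
  -- scaled snapshots
  set z : Fin K → X := fun i => Real.sqrt (α i) • y i with hzdef
  have hzz : ∀ i i', ⟪z i, z i'⟫_ℝ = 𝒦 i i' := by
    intro i i'
    rw [h𝒦, Real.sqrt_mul (hα i).le]
    simp [hzdef, real_inner_smul_left, real_inner_smul_right]
    ring
  -- columns orthonormal too
  have hcol : ∀ i i', ∑ k, φ k i * φ k i' = if i = i' then 1 else 0 := by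
    set U : Matrix (Fin K) (Fin K) ℝ := Matrix.of fun k i => φ k i with hU
    have h1 : U * U.transpose = 1 := by
      ext j j'
      simpa [hU, Matrix.mul_apply, Matrix.one_apply] using horth j j'
    have h2 : U.transpose * U = 1 := mul_eq_one_comm.mp h1
    intro i i'
    have := congrFun (congrFun h2 i) i'
    simpa [hU, Matrix.mul_apply, Matrix.one_apply] using this
  -- eigen-modes in X
  have hsym : ∀ i i', 𝒦 i i' = 𝒦 i' i := by
    intro i i'
    rw [h𝒦, h𝒦, real_inner_comm, mul_comm (α i)]
  set u : Fin K → X := fun k => ∑ i, φ k i • z i with hudef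
  have huu : ∀ k k', ⟪u k, u k'⟫_ℝ = if k = k' then lam k else 0 := by
    intro k k'
    have step : ⟪u k, u k'⟫_ℝ = ∑ i, φ k i * ((𝒦.mulVec (φ k')) i) := by
      rw [show u k = ∑ i, φ k i • z i from rfl, sum_inner]
      refine Finset.sum_congr rfl fun i _ => ?_
      rw [real_inner_smul_left]
      congr 1
      rw [show u k' = ∑ i', φ k' i' • z i' from rfl, inner_sum]
      simp only [Matrix.mulVec, dotProduct]
      refine Finset.sum_congr rfl fun i' _ => ?_
      rw [real_inner_smul_right, hzz]
      ring
    rw [step, heig k']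
    have : ∑ i, φ k i * ((lam k' • φ k') i) = lam k' * ∑ i, φ k i * φ k' i := by
      rw [Finset.mul_sum]
      refine Finset.sum_congr rfl fun i _ => ?_
      simp [mul_comm, mul_left_comm]
    rw [this, horth]
    split_ifs with h
    · subst h; ring
    · ring
  -- z in terms of u
  have hzu : ∀ i, z i = ∑ k, φ k i • u k := by
    intro i
    have : ∑ k, φ k i • u k = ∑ i', (∑ k, φ k i * φ k i') • z i' := by
      simp only [hudef, Finset.smul_sum, Finset.sum_smul, mul_smul]
      exact Finset.sum_comm
    rw [this]
    simp [hcol, ite_smul, Finset.sum_ite_eq]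
  -- coefficients
  set c : Fin ℓ → Fin K → ℝ := fun j k => ⟪u k, ψt j⟫_ℝ with hcdef
  have hziψ : ∀ i j, ⟪z i, ψt j⟫_ℝ = ∑ k, φ k i * c j k := by
    intro i j
    rw [hzu i, sum_inner]
    simp [hcdef, real_inner_smul_left]
  -- per-snapshot error
  have hψ : ∀ j j', ⟪ψt j, ψt j'⟫_ℝ = if j = j' then 1 else 0 :=
    orthonormal_iff_ite.mp hψt
  have herr : ∀ i, α i * ‖y i - ∑ j, ⟪y i, ψt j⟫_ℝ • ψt j‖ ^ 2
      = ‖z i‖ ^ 2 - ∑ j, (⟪z i, ψt j⟫_ℝ) ^ 2 := by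
    intro i
    have hyw : ⟪y i, ∑ j, ⟪y i, ψt j⟫_ℝ • ψt j⟫_ℝ = ∑ j, (⟪y i, ψt j⟫_ℝ) ^ 2 := by
      rw [inner_sum]
      refine Finset.sum_congr rfl fun j _ => ?_
      rw [real_inner_smul_right]; ring
    have hww : ‖∑ j, ⟪y i, ψt j⟫_ℝ • ψt j‖ ^ 2 = ∑ j, (⟪y i, ψt j⟫_ℝ) ^ 2 := by
      rw [← real_inner_self_eq_norm_sq, sum_inner]
      refine Finset.sum_congr rfl fun j _ => ?_
      rw [real_inner_smul_left, inner_sum]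
      simp [real_inner_smul_right, hψ, mul_ite]
      ring
    have hexp : ‖y i - ∑ j, ⟪y i, ψt j⟫_ℝ • ψt j‖ ^ 2
        = ‖y i‖ ^ 2 - ∑ j, (⟪y i, ψt j⟫_ℝ) ^ 2 := by
      rw [norm_sub_sq_real, hyw, hww]; ring
    have hzn : ‖z i‖ ^ 2 = α i * ‖y i‖ ^ 2 := by
      simp [hzdef, norm_smul, Real.norm_eq_abs, abs_of_nonneg (Real.sqrt_nonneg _),
        mul_pow, Real.sq_sqrt (hα i).le]
    have hzψ : ∀ j, (⟪z i, ψt j⟫_ℝ) ^ 2 = α i * (⟪y i, ψt j⟫_ℝ) ^ 2 := by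
      intro j
      simp [hzdef, real_inner_smul_left, mul_pow, Real.sq_sqrt (hα i).le]
    rw [hexp, hzn, mul_sub, Finset.mul_sum]
    congr 1
    exact Finset.sum_congr rfl fun j _ => (hzψ j).symm
  -- total error
  have hE : ∑ i, α i * ‖y i - ∑ j, ⟪y i, ψt j⟫_ℝ • ψt j‖ ^ 2
      = ∑ k, lam k - ∑ j, ∑ k, (c j k) ^ 2 := by
    have h1 : ∑ i, ‖z i‖ ^ 2 = ∑ k, lam k := by
      have : ∀ i, ‖z i‖ ^ 2 = ∑ k, (φ k i)^2 * lam k := by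
        intro i
        rw [← real_inner_self_eq_norm_sq, hzu i, sum_inner]
        refine Finset.sum_congr rfl fun k _ => ?_
        rw [real_inner_smul_left, inner_sum]
        simp [real_inner_smul_right, huu, mul_ite]
        ring
      rw [Finset.sum_congr rfl fun i _ => this i, Finset.sum_comm]
      refine Finset.sum_congr rfl fun k _ => ?_
      rw [← Finset.sum_mul,
        show (∑ i, (φ k i)^2) = ∑ i, φ k i * φ k i from
          Finset.sum_congr rfl fun i _ => by ring,
        horth k k]
      simp
    have h2 : ∀ j, ∑ i, (⟪z i, ψt j⟫_ℝ) ^ 2 = ∑ k, (c j k) ^ 2 := by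
      intro j
      have expand : ∀ i, (⟪z i, ψt j⟫_ℝ) ^ 2
          = ∑ k, ∑ k', (φ k i * φ k' i) * (c j k * c j k') := by
        intro i
        rw [hziψ i j, sq, Finset.sum_mul_sum]
        refine Finset.sum_congr rfl fun k _ => Finset.sum_congr rfl fun k' _ => by ring
      rw [Finset.sum_congr rfl fun i _ => expand i, Finset.sum_comm]
      refine Finset.sum_congr rfl fun k _ => ?_
      rw [Finset.sum_comm]
      have : ∀ k', ∑ i, φ k i * φ k' i * (c j k * c j k')
          = (if k = k' then 1 else 0) * (c j k * c j k') := by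
        intro k'
        rw [← Finset.sum_mul, horth]
      rw [Finset.sum_congr rfl fun k' _ => this k']
      simp [ite_mul]
      ring
    rw [Finset.sum_congr rfl fun i _ => herr i, Finset.sum_sub_distrib, h1,
      Finset.sum_comm]
    congr 1
    exact Finset.sum_congr rfl fun j _ => h2 j
  -- Bessel 1 : per mode
  have hbessel1 : ∀ k, ∑ j, (c j k) ^ 2 ≤ lam k := by
    intro k
    have := Orthonormal.sum_inner_products_le (u k) hψt (s := univ)
    have hn : ‖u k‖ ^ 2 = lam k := by
      rw [← real_inner_self_eq_norm_sq]
      simpa using huu k k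
    rw [hn] at this
    refine le_trans (le_of_eq ?_) this
    refine Finset.sum_congr rfl fun j _ => ?_
    simp only [hcdef]
    rw [Real.norm_eq_abs, sq_abs, real_inner_comm]
  -- zero modes
  have hczero : ∀ j k, ¬ 0 < lam k → c j k = 0 := by
    intro j k h
    have hk0 : lam k = 0 := le_antisymm (not_lt.mp h) (hnonneg k)
    have : ⟪u k, u k⟫_ℝ = 0 := by rw [huu k k]; simp [hk0]
    have hu0 : u k = 0 := inner_self_eq_zero.mp this
    simp [hcdef, hu0]
  -- Bessel 2 : per basis vector, normalized modes
  have hbessel2 : ∀ j, ∑ k, (if 0 < lam k then (c j k) ^ 2 / lam k else 0) ≤ 1 := by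
    intro j
    set v : {k : Fin K // 0 < lam k} → X :=
      fun k => (Real.sqrt (lam k.1))⁻¹ • u k.1 with hvdef
    have hv : Orthonormal ℝ v := by
      rw [orthonormal_iff_ite]
      intro k k'
      rw [hvdef]
      simp only [real_inner_smul_left, real_inner_smul_right, huu]
      rcases eq_or_ne k k' with h | h
      · subst h
        rw [if_pos rfl, if_pos rfl, ← mul_assoc, ← mul_inv,
          Real.mul_self_sqrt (hnonneg k.1), inv_mul_cancel₀ k.2.ne']
      · have : (k : Fin K) ≠ (k' : Fin K) := fun hh => h (Subtype.ext hh)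
        simp [this, h]
    have hb := Orthonormal.sum_inner_products_le (ψt j) hv (s := univ)
    have hψn : ‖ψt j‖ ^ 2 = 1 := by rw [hψt.1 j]; norm_num
    rw [hψn] at hb
    have heq : ∑ k : {k : Fin K // 0 < lam k}, ‖⟪v k, ψt j⟫_ℝ‖ ^ 2
        = ∑ k, (if 0 < lam k then (c j k) ^ 2 / lam k else 0) := by
      have e1 : ∑ k : {k : Fin K // 0 < lam k}, ‖⟪v k, ψt j⟫_ℝ‖ ^ 2
          = ∑ k ∈ univ.filter (fun k : Fin K => 0 < lam k),
              ‖⟪(Real.sqrt (lam k))⁻¹ • u k, ψt j⟫_ℝ‖ ^ 2 :=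
        (Finset.sum_subtype (p := fun k : Fin K => 0 < lam k)
          (univ.filter (fun k : Fin K => 0 < lam k))
          (fun x => by simp)
          (fun k => ‖⟪(Real.sqrt (lam k))⁻¹ • u k, ψt j⟫_ℝ‖ ^ 2)).symm
      rw [e1, Finset.sum_filter]
      refine Finset.sum_congr rfl fun k _ => ?_
      by_cases h : 0 < lam k
      · rw [if_pos h, if_pos h]
        rw [real_inner_smul_left, Real.norm_eq_abs, sq_abs, mul_pow,
          inv_pow, Real.sq_sqrt (hnonneg k), div_eq_inv_mul]
      · rw [if_neg h, if_neg h]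
    rw [← heq]
    exact hb
  -- row sums
  set τ : Fin ℓ → Fin K → ℝ :=
    fun j k => if 0 < lam k then (c j k) ^ 2 / lam k else 0 with hτdef
  have hτ0 : ∀ j k, 0 ≤ τ j k := by
    intro j k
    simp only [hτdef]
    split_ifs with h
    · positivity
    · exact le_refl _
  have hceq : ∀ j k, (c j k) ^ 2 = lam k * τ j k := by
    intro j k
    simp only [hτdef]
    split_ifs with h
    · rw [mul_div_cancel₀ _ h.ne']
    · rw [hczero j k h]; ring
  set s : Fin K → ℝ := fun k => ∑ j, τ j k with hsdef
  have hs0 : ∀ k, 0 ≤ s k := fun k => Finset.sum_nonneg fun j _ => hτ0 j k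
  have hs1 : ∀ k, s k ≤ 1 := by
    intro k
    by_cases h : 0 < lam k
    · have : s k = (∑ j, (c j k) ^ 2) / lam k := by
        rw [hsdef, hτdef]
        simp only [if_pos h]
        rw [Finset.sum_div]
      rw [this, div_le_one h]
      exact hbessel1 k
    · have : s k = 0 := by
        rw [hsdef]
        refine Finset.sum_eq_zero fun j _ => ?_
        rw [hτdef]; simp [h]
      rw [this]; norm_num
  have hstot : ∑ k, s k ≤ (ℓ : ℝ) := by
    simp only [hsdef]
    rw [Finset.sum_comm]
    calc ∑ j, ∑ k, τ j k ≤ ∑ j : Fin ℓ, (1:ℝ) :=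
          Finset.sum_le_sum fun j _ => hbessel2 j
      _ = (ℓ : ℝ) := by simp
  -- the key sum rewrite
  have hT : ∑ j, ∑ k, (c j k) ^ 2 = ∑ k, lam k * s k := by
    rw [Finset.sum_comm]
    refine Finset.sum_congr rfl fun k _ => ?_
    simp only [hsdef]
    rw [Finset.mul_sum]
    exact Finset.sum_congr rfl fun j _ => hceq j k
  -- cardinality of the low block
  have hμidx : ℓ - 1 < K := by omega
  set μ : ℝ := lam ⟨ℓ - 1, hμidx⟩ with hμdef
  have hμ0 : 0 ≤ μ := hnonneg _
  set A : Finset (Fin K) := univ.filter (fun k : Fin K => (k : ℕ) < ℓ) with hAdef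
  set B : Finset (Fin K) := univ.filter (fun k : Fin K => ¬ (k : ℕ) < ℓ) with hBdef
  have hcardA : (A.card : ℝ) = (ℓ : ℝ) := by
    have : A = (univ : Finset (Fin ℓ)).map
        ⟨Fin.castLE hℓK, Fin.castLE_injective hℓK⟩ := by
      ext k
      simp only [hAdef, Finset.mem_filter, Finset.mem_univ, true_and,
        Finset.mem_map, Function.Embedding.coeFn_mk]
      constructor
      · intro hk
        exact ⟨⟨(k : ℕ), hk⟩, by ext; simp⟩
      · rintro ⟨a, -, rfl⟩
        simp
    have hc : A.card = ℓ := by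
      rw [this, Finset.card_map, Finset.card_univ, Fintype.card_fin]
    exact_mod_cast congrArg (Nat.cast : ℕ → ℝ) hc
  -- key inequality : ∑ lam k * s k ≤ ∑_{k ∈ A} lam k
  have hkey : ∑ k, lam k * s k ≤ ∑ k ∈ A, lam k := by
    have hsplit : ∑ k, lam k * s k
        = ∑ k ∈ A, lam k * s k + ∑ k ∈ B, lam k * s k := by
      rw [hAdef, hBdef, Finset.sum_filter_add_sum_filter_not]
    have hA : ∑ k ∈ A, lam k * s k
        ≤ ∑ k ∈ A, (lam k + μ * (s k - 1)) := by
      refine Finset.sum_le_sum fun k hk => ?_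
      have hkℓ : (k : ℕ) < ℓ := by
        rw [hAdef] at hk; simpa using hk
      have hμk : μ ≤ lam k := by
        refine hdec ?_
        rw [Fin.le_def]
        simp
        omega
      nlinarith [hs1 k, hs0 k]
    have hB : ∑ k ∈ B, lam k * s k ≤ ∑ k ∈ B, μ * s k := by
      refine Finset.sum_le_sum fun k hk => ?_
      have hkℓ : ℓ ≤ (k : ℕ) := by
        rw [hBdef] at hk; simp at hk; omega
      have hμk : lam k ≤ μ := by
        refine hdec ?_
        rw [Fin.le_def]
        simp
        omega
      exact mul_le_mul_of_nonneg_right hμk (hs0 k)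
    have hcomb : ∑ k ∈ A, (lam k + μ * (s k - 1)) + ∑ k ∈ B, μ * s k
        = ∑ k ∈ A, lam k + μ * (∑ k, s k - (ℓ : ℝ)) := by
      rw [Finset.sum_add_distrib]
      have : ∑ k ∈ A, μ * (s k - 1) + ∑ k ∈ B, μ * s k
          = μ * (∑ k, s k - (ℓ:ℝ)) := by
        rw [← Finset.mul_sum, ← Finset.mul_sum, ← mul_add]
        congr 1
        rw [Finset.sum_sub_distrib, Finset.sum_const, nsmul_eq_mul, mul_one]
        rw [hcardA]
        have : ∑ k ∈ A, s k + ∑ k ∈ B, s k = ∑ k, s k := by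
          rw [hAdef, hBdef, Finset.sum_filter_add_sum_filter_not]
        linarith
      linarith
    have hlast : μ * (∑ k, s k - (ℓ : ℝ)) ≤ 0 :=
      mul_nonpos_of_nonneg_of_nonpos hμ0 (by linarith [hstot])
    calc ∑ k, lam k * s k
        = ∑ k ∈ A, lam k * s k + ∑ k ∈ B, lam k * s k := hsplit
      _ ≤ ∑ k ∈ A, (lam k + μ * (s k - 1)) + ∑ k ∈ B, μ * s k := by
          exact add_le_add hA hB
      _ = ∑ k ∈ A, lam k + μ * (∑ k, s k - (ℓ : ℝ)) := hcomb
      _ ≤ ∑ k ∈ A, lam k := by linarith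
  -- finish
  have hgoalB : univ.filter (fun j : Fin K => ℓ ≤ (j : ℕ)) = B := by
    rw [hBdef]
    ext k
    simp [not_lt]
  rw [hgoalB, hE, hT]
  have htot : ∑ k ∈ A, lam k + ∑ k ∈ B, lam k = ∑ k, lam k := by
    rw [hAdef, hBdef, Finset.sum_filter_add_sum_filter_not]
  linarith
end

section
/- Assume the inf-sup condition holds with constant β > 0, i.e. ‖Tq‖_V ≥ β ‖q‖_Q for all q ∈ Q. Let Q_ℓ ⊆ Q be a subspace and V_ℓ ⊆ V a subspace enriched with supremizers, i.e. Tq ∈ V_ℓ for every q ∈ Q_ℓ. Then the reduced pair (V_ℓ, Q_ℓ) is inf-sup stable with the same constant: for every q ∈ Q_ℓ with q ≠ 0 there exists v ∈ V_ℓ with v ≠ 0 and b(v, q) ≥ β ‖q‖_Q ‖v‖_V. -/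
open scoped InnerProductSpace

/-- Supremizer enrichment preserves inf-sup stability: if `‖Tq‖ ≥ β ‖q‖` for all `q`
(inf-sup condition with constant `β > 0`) and the reduced velocity space `Vℓ` contains
the supremizer `Tq` of every `q` in the reduced pressure space `Qℓ`, then for every
nonzero `q ∈ Qℓ` there is a nonzero `v ∈ Vℓ` with `b(v, q) ≥ β ‖q‖ ‖v‖`. -/
theorem supremizer_enrichment_infsup_stable
    {V Q : Type*} [NormedAddCommGroup V] [InnerProductSpace ℝ V] [CompleteSpace V]
    [NormedAddCommGroup Q] [InnerProductSpace ℝ Q] [CompleteSpace Q]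
    (b : V →L[ℝ] Q →L[ℝ] ℝ) (T : Q → V)
    (hT : ∀ q : Q, ∀ v : V, ⟪T q, v⟫_ℝ = b v q)
    (β : ℝ) (hβ : 0 < β)
    (hinfsup : ∀ q : Q, β * ‖q‖ ≤ ‖T q‖)
    (Qℓ : Submodule ℝ Q) (Vℓ : Submodule ℝ V)
    (henrich : ∀ q ∈ Qℓ, T q ∈ Vℓ) :
    ∀ q ∈ Qℓ, q ≠ 0 → ∃ v ∈ Vℓ, v ≠ 0 ∧ β * ‖q‖ * ‖v‖ ≤ b v q := by
  intro q hq hq0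
  refine ⟨T q, henrich q hq, ?_, ?_⟩
  · intro h
    have h1 := hinfsup q
    rw [h, norm_zero] at h1
    have : 0 < β * ‖q‖ := mul_pos hβ (norm_pos_iff.mpr hq0)
    linarith
  · have key : (b (T q)) q = ‖T q‖ ^ 2 := by
      rw [← hT q (T q), real_inner_self_eq_norm_sq]
    rw [key, sq]
    exact mul_le_mul_of_nonneg_right (hinfsup q) (norm_nonneg _)
end
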